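/- arXiv:2205.10842 — 6 statements merged into one kernel-verified Lean document; each statement's English description precedes it below -/
import Mathlib

section
/- Let $p_0, p_1$ be probability density functions on $[0,\infty)$ with cumulative distribution functions $P_0, P_1$ satisfying $P_0(x) > P_1(x)$ for all $x$ with $P_z(x) \in (0,1)$ (feature bias against group 0). Let $c(x_1,x_2) = d(x_1,x_2)\mathbf{1}(x_2 > x_1)$ be a cost function where $d$ is continuously differentiable with $\partial d/\partial x_1 < 0$ on $(0,x_2)$ and $d(x,x)=0$. Then for any threshold $\tau > 0$ with $P_0(\tau), P_1(\tau) \in (0,1)$, the social burden gap $G(\tau) := \int_0^\tau d(x,\tau)p_0(x)dx - \int_0^\tau d(x,\tau)p_1(x)dx$ is strictly positive. -/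
open MeasureTheory Set
open scoped Interval Topology

/-! Write `g = d(·, τ)` and `P_z` for the CDFs. Integrating by parts, using `g τ = 0` and
`P_z 0 = 0`, turns each burden `∫₀^τ g p_z` into `∫₀^τ (-g') P_z`, so the gap is
`∫₀^τ (-g') (P₀ - P₁)` with weight `-g' > 0`. The bias hypothesis only compares `P₀` and `P₁`
where both lie in `(0, 1)`, but together with monotonicity and the intermediate value theorem it
gives `P₁ ≤ P₀` on all of `[0, τ]`; the inequality is strict at `τ`, hence near `τ`. -/

lemma monotone_integral_of_nonneg {p : ℝ → ℝ} (hp : Continuous p) (hp0 : ∀ x, 0 ≤ p x)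
    (a : ℝ) : Monotone fun x => ∫ t in a..x, p t := fun x y hxy => by
  rw [← sub_nonneg, intervalIntegral.integral_interval_sub_left (hp.intervalIntegrable _ _)
    (hp.intervalIntegrable _ _)]
  exact intervalIntegral.integral_nonneg hxy fun t _ => hp0 t

lemma le_of_forall_lt_of_mem_Ioo {F G : ℝ → ℝ} {x b : ℝ} (hF : Continuous F)
    (hFm : Monotone F) (hGm : Monotone G) (hxb : x ≤ b) (hFx : 0 ≤ F x)
    (hFb : F b ∈ Ioo 0 1) (hGb : G b < 1)
    (hlt : ∀ y, F y ∈ Ioo 0 1 → G y ∈ Ioo 0 1 → G y < F y) : G x ≤ F x := by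
  by_contra! hFG
  -- `F` reaches the level `min (G x) (F b) ∈ (0, 1)` at some `y ≥ x`, where `G y ≥ G x` is too big.
  obtain ⟨y, ⟨hxy, hyb⟩, hFy⟩ : min (G x) (F b) ∈ F '' Icc x b :=
    intermediate_value_Icc hxb hF.continuousOn ⟨le_min hFG.le (hFm hxb), min_le_right _ _⟩
  have hGx : 0 < G x := hFx.trans_lt hFG
  have hGy : G x ≤ G y := hGm hxy
  have := hlt y ⟨hFy ▸ lt_min hGx hFb.1, hFy ▸ (min_le_right _ _).trans_lt hFb.2⟩
    ⟨hGx.trans_le hGy, (hGm hyb).trans_lt hGb⟩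
  linarith [min_le_left (G x) (F b)]

lemma integral_mul_eq_neg_integral_deriv_mul_integral {g g' p : ℝ → ℝ} {a b : ℝ}
    (hg : ∀ x ∈ [[a, b]], HasDerivWithinAt g (g' x) [[a, b]] x) (hg' : ContinuousOn g' [[a, b]])
    (hp : Continuous p) (hgb : g b = 0) :
    ∫ x in a..b, g x * p x = -∫ x in a..b, g' x * ∫ t in a..x, p t := by
  rw [intervalIntegral.integral_mul_deriv_eq_deriv_mul_of_hasDerivWithinAt hg
    (fun x _ => (hp.integral_hasStrictDerivAt a x).hasDerivAt.hasDerivWithinAt)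
    hg'.intervalIntegrable (hp.intervalIntegrable a b)]
  simp [hgb]

lemma integral_mul_pos_of_pos_right {w D : ℝ → ℝ} {a b : ℝ} (hab : a < b)
    (hw : ContinuousOn w (Icc a b)) (hD : ContinuousOn D (Icc a b))
    (hw_pos : ∀ x ∈ Ioo a b, 0 < w x) (hD_nonneg : ∀ x ∈ Icc a b, 0 ≤ D x) (hDb_pos : 0 < D b) :
    0 < ∫ x in a..b, w x * D x := by
  have hw_nonneg : ∀ x ∈ Icc a b, 0 ≤ w x := by
    rw [← closure_Ioo hab.ne] at hw ⊢
    exact le_on_closure (fun x hx => (hw_pos x hx).le) continuousOn_const hw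
  have hDnear : ∀ᶠ x in 𝓝[<] b, 0 < D x := by
    rw [← nhdsWithin_Ioo_eq_nhdsLT hab]
    exact ((hD b (right_mem_Icc.2 hab.le)).mono Ioo_subset_Icc_self).eventually
      (lt_mem_nhds hDb_pos)
  obtain ⟨c, hDc, hc⟩ := (hDnear.and (Ioo_mem_nhdsLT hab)).exists
  exact intervalIntegral.integral_pos hab (hw.mul hD)
    (fun x hx => mul_nonneg (hw_nonneg x (Ioc_subset_Icc_self hx))
      (hD_nonneg x (Ioc_subset_Icc_self hx)))
    ⟨c, Ioo_subset_Icc_self hc, mul_pos (hw_pos c hc) hDc⟩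

/-- Proposition 3.1: under feature bias against group 0, any single-threshold
classifier has strictly positive social burden gap. -/
theorem stmt_0
    (p0 p1 P0 P1 : ℝ → ℝ)
    (hp0 : ∀ x, 0 ≤ p0 x) (hp1 : ∀ x, 0 ≤ p1 x)
    (hp0c : Continuous p0) (hp1c : Continuous p1)
    (hP0 : ∀ x, P0 x = ∫ t in (0:ℝ)..x, p0 t)
    (hP1 : ∀ x, P1 x = ∫ t in (0:ℝ)..x, p1 t)
    (hbias : ∀ x, P0 x ∈ Set.Ioo (0:ℝ) 1 → P1 x ∈ Set.Ioo (0:ℝ) 1 → P1 x < P0 x)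
    (d : ℝ → ℝ → ℝ)
    (hd_smooth : ∀ x₂, ContDiffOn ℝ 1 (fun x₁ => d x₁ x₂) (Set.Icc 0 x₂))
    (hd_grad : ∀ x₂ x₁, x₁ ∈ Set.Ioo 0 x₂ → deriv (fun x => d x x₂) x₁ < 0)
    (hd_zero : ∀ x, d x x = 0)
    (τ : ℝ) (hτ : 0 < τ)
    (hPτ0 : P0 τ ∈ Set.Ioo (0:ℝ) 1) (hPτ1 : P1 τ ∈ Set.Ioo (0:ℝ) 1) :
    0 < (∫ x in (0:ℝ)..τ, d x τ * p0 x) - (∫ x in (0:ℝ)..τ, d x τ * p1 x) := by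
  obtain rfl : P0 = fun x => ∫ t in (0:ℝ)..x, p0 t := funext hP0
  obtain rfl : P1 = fun x => ∫ t in (0:ℝ)..x, p1 t := funext hP1
  set g' := derivWithin (fun x => d x τ) (Icc 0 τ)
  have hIcc : [[0, τ]] = Icc 0 τ := uIcc_of_le hτ.le
  have hg : ∀ x ∈ [[0, τ]], HasDerivWithinAt (fun x => d x τ) (g' x) [[0, τ]] x := by
    rw [hIcc]
    exact fun x hx => ((hd_smooth τ).differentiableOn one_ne_zero x hx).hasDerivWithinAt
  have hg'c : ContinuousOn g' (Icc 0 τ) :=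
    (hd_smooth τ).continuousOn_derivWithin (uniqueDiffOn_Icc hτ) le_rfl
  have hg'neg : ∀ x ∈ Ioo 0 τ, g' x < 0 := fun x hx =>
    (derivWithin_of_mem_nhds (Icc_mem_nhds hx.1 hx.2)).trans_lt (hd_grad τ x hx)
  have hP0c := intervalIntegral.continuous_primitive (μ := volume) hp0c.intervalIntegrable 0
  have hP1c := intervalIntegral.continuous_primitive (μ := volume) hp1c.intervalIntegrable 0
  have hP0m := monotone_integral_of_nonneg hp0c hp0 0
  have hP1m := monotone_integral_of_nonneg hp1c hp1 0
  have hord : ∀ x ∈ Icc 0 τ, (∫ t in (0:ℝ)..x, p1 t) ≤ ∫ t in (0:ℝ)..x, p0 t := fun x hx =>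
    le_of_forall_lt_of_mem_Ioo hP0c hP0m hP1m hx.2 (by simpa using hP0m hx.1) hPτ0 hPτ1.2 hbias
  have hg'P_integrable {P : ℝ → ℝ} (hP : Continuous P) :
      IntervalIntegrable (fun x => g' x * P x) volume 0 τ :=
    (hg'c.mul hP.continuousOn).intervalIntegrable_of_Icc hτ.le
  rw [integral_mul_eq_neg_integral_deriv_mul_integral hg (hIcc ▸ hg'c) hp0c (hd_zero τ),
    integral_mul_eq_neg_integral_deriv_mul_integral hg (hIcc ▸ hg'c) hp1c (hd_zero τ),
    neg_sub_neg, ← intervalIntegral.integral_sub (hg'P_integrable hP1c) (hg'P_integrable hP0c)]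
  calc 0 < ∫ x in (0:ℝ)..τ, -g' x * ((∫ t in (0:ℝ)..x, p0 t) - ∫ t in (0:ℝ)..x, p1 t) :=
        integral_mul_pos_of_pos_right hτ hg'c.neg (hP0c.sub hP1c).continuousOn
          (fun x hx => neg_pos.2 (hg'neg x hx)) (fun x hx => sub_nonneg.2 (hord x hx))
          (sub_pos.2 (hbias τ hPτ0 hPτ1))
    _ = _ := by congr 1; ext x; ring
end

section
/- (Upper bound on social burden gap, Theorem 3.3.) Let $p_0, p_1$ be densities on $[0,\infty)$ with CDFs $P_0, P_1$. Let $d(x_1,x_2)$ satisfy $d(\tau,\tau)=0$ and $\partial d/\partial x_1 \in [g_l,g_u]$ on $(0,x_2)$ with $g_l \le g_u \le 0$. Define the social burden gap $G = \int_0^{\tau_0} d(x,\tau_0)p_0(x)dx - \int_0^{\tau_1} d(x,\tau_1)p_1(x)dx$, the selection rate disparity $H = P_1(\tau_1) - P_0(\tau_0)$, and $E_{z} = \int_0^{\tau_z} x\,p_z(x)dx$. Then $G \leq g_u \tau_1 H + (g_u\tau_1 - g_l\tau_0)P_0(\tau_0) - g_u E_1 + g_l E_0$. -/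
open MeasureTheory Set

/-
Since `d τ τ = 0` and `∂d/∂x₁ ∈ [g_l, g_u]`, the mean value theorem squeezes the manipulation
cost between two linear functions: `-g_u (τ - x) ≤ d(x, τ) ≤ -g_l (τ - x)` on `[0, τ]`.
Integrating against a nonnegative density turns these into bounds on each group's burden in
terms of `τ P(τ) - E`; bounding group 0's burden from above and group 1's from below gives the
estimate for their difference.
-/

lemma sub_mem_Icc_mul_of_deriv_mem_Icc {f : ℝ → ℝ} {a b gl gu : ℝ}
    (hf : ContinuousOn f (Icc a b)) (hf' : DifferentiableOn ℝ f (Ioo a b))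
    (hderiv : ∀ y ∈ Ioo a b, deriv f y ∈ Icc gl gu)
    {x y : ℝ} (hx : x ∈ Icc a b) (hy : y ∈ Icc a b) (hxy : x ≤ y) :
    f y - f x ∈ Icc (gl * (y - x)) (gu * (y - x)) := by
  rw [← interior_Icc] at hf' hderiv
  exact ⟨(convex_Icc a b).mul_sub_le_image_sub_of_le_deriv hf hf'
      (fun z hz => (hderiv z hz).1) x hx y hy hxy,
    (convex_Icc a b).image_sub_le_mul_sub_of_deriv_le hf hf'
      (fun z hz => (hderiv z hz).2) x hx y hy hxy⟩

section WeightedIntegral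

variable {p : ℝ → ℝ} {a b : ℝ}

lemma integral_mul_sub_mul (hp : Continuous p) (c : ℝ) :
    ∫ x in a..b, c * (b - x) * p x
      = c * (b * (∫ x in a..b, p x) - ∫ x in a..b, x * p x) := by
  have hsplit : ∀ x, c * (b - x) * p x = c * b * p x - c * (x * p x) := fun x => by ring
  simp_rw [hsplit]
  rw [intervalIntegral.integral_sub ((by fun_prop : Continuous _).intervalIntegrable _ _)
      ((by fun_prop : Continuous _).intervalIntegrable _ _),
    intervalIntegral.integral_const_mul, intervalIntegral.integral_const_mul]
  ring

lemma integral_mul_mem_Icc_of_mem_Icc_mul_sub (hp : Continuous p)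
    (hp_nonneg : ∀ x ∈ Icc a b, 0 ≤ p x) (hab : a ≤ b) {φ : ℝ → ℝ}
    (hφ : ContinuousOn φ (Icc a b)) {cl cu : ℝ}
    (hbound : ∀ x ∈ Icc a b, φ x ∈ Icc (cl * (b - x)) (cu * (b - x))) :
    ∫ x in a..b, φ x * p x ∈
      Icc (cl * (b * (∫ x in a..b, p x) - ∫ x in a..b, x * p x))
        (cu * (b * (∫ x in a..b, p x) - ∫ x in a..b, x * p x)) := by
  have hφp : IntervalIntegrable (fun x => φ x * p x) volume a b :=
    (hφ.mul hp.continuousOn).intervalIntegrable_of_Icc hab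
  have hlin (c : ℝ) : IntervalIntegrable (fun x => c * (b - x) * p x) volume a b :=
    (by fun_prop : Continuous _).intervalIntegrable _ _
  rw [← integral_mul_sub_mul hp, ← integral_mul_sub_mul hp]
  constructor
  · refine intervalIntegral.integral_mono_on hab (hlin cl) hφp fun x hx => ?_
    exact mul_le_mul_of_nonneg_right (hbound x hx).1 (hp_nonneg x hx)
  · refine intervalIntegral.integral_mono_on hab hφp (hlin cu) fun x hx => ?_
    exact mul_le_mul_of_nonneg_right (hbound x hx).2 (hp_nonneg x hx)

end WeightedIntegral

lemma mem_Icc_mul_sub_of_deriv_mem_Icc {d : ℝ → ℝ → ℝ} {gl gu τ : ℝ}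
    (hd_smooth : ContDiffOn ℝ 1 (fun x₁ => d x₁ τ) (Icc 0 τ))
    (hd_grad : ∀ x₁ ∈ Ioo 0 τ, deriv (fun x => d x τ) x₁ ∈ Icc gl gu)
    (hd_zero : d τ τ = 0) :
    ∀ x ∈ Icc 0 τ, d x τ ∈ Icc (-gu * (τ - x)) (-gl * (τ - x)) := by
  intro x hx
  have hmvt := sub_mem_Icc_mul_of_deriv_mem_Icc hd_smooth.continuousOn
    ((hd_smooth.differentiableOn one_ne_zero).mono Ioo_subset_Icc_self) hd_grad
    hx (right_mem_Icc.2 (hx.1.trans hx.2)) hx.2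
  simp only [hd_zero, mem_Icc] at hmvt ⊢
  constructor <;> linarith [hmvt.1, hmvt.2]

theorem stmt_4_general
    (p0 p1 P0 P1 : ℝ → ℝ)
    (hp0 : ∀ x, 0 ≤ p0 x) (hp1 : ∀ x, 0 ≤ p1 x)
    (hp0c : Continuous p0) (hp1c : Continuous p1)
    (hP0 : ∀ x, P0 x = ∫ t in (0:ℝ)..x, p0 t)
    (hP1 : ∀ x, P1 x = ∫ t in (0:ℝ)..x, p1 t)
    (d : ℝ → ℝ → ℝ) (gl gu : ℝ)
    (hd_smooth : ∀ x₂, ContDiffOn ℝ 1 (fun x₁ => d x₁ x₂) (Set.Icc 0 x₂))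
    (hd_grad : ∀ x₂ x₁, x₁ ∈ Set.Ioo 0 x₂ →
      deriv (fun x => d x x₂) x₁ ∈ Set.Icc gl gu)
    (hd_zero : ∀ x, d x x = 0)
    (τ0 τ1 : ℝ) (hτ0 : 0 < τ0) (hτ1 : 0 < τ1)
    (G H E0 E1 : ℝ)
    (hG : G = (∫ x in (0:ℝ)..τ0, d x τ0 * p0 x) - (∫ x in (0:ℝ)..τ1, d x τ1 * p1 x))
    (hH : H = P1 τ1 - P0 τ0)
    (hE0 : E0 = ∫ x in (0:ℝ)..τ0, x * p0 x)
    (hE1 : E1 = ∫ x in (0:ℝ)..τ1, x * p1 x) :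
    G ≤ gu * τ1 * H + (gu * τ1 - gl * τ0) * P0 τ0 - gu * E1 + gl * E0 := by
  have burden_mem_Icc {p : ℝ → ℝ} (hp : ∀ x, 0 ≤ p x) (hpc : Continuous p) {τ : ℝ}
      (hτ : 0 < τ) :=
    integral_mul_mem_Icc_of_mem_Icc_mul_sub hpc (fun x _ => hp x) hτ.le
      (hd_smooth τ).continuousOn
      (mem_Icc_mul_sub_of_deriv_mem_Icc (hd_smooth τ) (hd_grad τ) (hd_zero τ))
  have hburden0 := (burden_mem_Icc hp0 hp0c hτ0).2
  have hburden1 := (burden_mem_Icc hp1 hp1c hτ1).1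
  rw [← hP0, ← hE0] at hburden0
  rw [← hP1, ← hE1] at hburden1
  rw [hG, hH]
  linarith

/-- Theorem 3.3 (upper bound on the social burden gap). -/
theorem stmt_4
    (p0 p1 P0 P1 : ℝ → ℝ)
    (hp0 : ∀ x, 0 ≤ p0 x) (hp1 : ∀ x, 0 ≤ p1 x)
    (hp0c : Continuous p0) (hp1c : Continuous p1)
    (hP0 : ∀ x, P0 x = ∫ t in (0:ℝ)..x, p0 t)
    (hP1 : ∀ x, P1 x = ∫ t in (0:ℝ)..x, p1 t)
    (d : ℝ → ℝ → ℝ) (gl gu : ℝ) (hglu : gl ≤ gu) (hgu : gu ≤ 0)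
    (hd_smooth : ∀ x₂, ContDiffOn ℝ 1 (fun x₁ => d x₁ x₂) (Set.Icc 0 x₂))
    (hd_grad : ∀ x₂ x₁, x₁ ∈ Set.Ioo 0 x₂ →
      deriv (fun x => d x x₂) x₁ ∈ Set.Icc gl gu)
    (hd_zero : ∀ x, d x x = 0)
    (τ0 τ1 : ℝ) (hτ0 : 0 < τ0) (hτ1 : 0 < τ1)
    (G H E0 E1 : ℝ)
    (hG : G = (∫ x in (0:ℝ)..τ0, d x τ0 * p0 x) - (∫ x in (0:ℝ)..τ1, d x τ1 * p1 x))
    (hH : H = P1 τ1 - P0 τ0)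
    (hE0 : E0 = ∫ x in (0:ℝ)..τ0, x * p0 x)
    (hE1 : E1 = ∫ x in (0:ℝ)..τ1, x * p1 x) :
    G ≤ gu * τ1 * H + (gu * τ1 - gl * τ0) * P0 τ0 - gu * E1 + gl * E0 :=
  stmt_4_general p0 p1 P0 P1 hp0 hp1 hp0c hp1c hP0 hP1 d gl gu hd_smooth hd_grad hd_zero τ0 τ1 hτ0
    hτ1 G H E0 E1 hG hH hE0 hE1
end

section
/- (Lower bound on social burden gap, Theorem 3.3.) Under the same hypotheses as the upper bound, $G \geq g_l \tau_1 H + (g_l\tau_1 - g_u\tau_0)P_0(\tau_0) - g_l E_1 + g_u E_0$, where $H = P_1(\tau_1) - P_0(\tau_0)$ and $E_z = \int_0^{\tau_z} x\,p_z(x)dx$. -/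
/-!
By the mean value theorem, `d(·, τ)` vanishes at `τ` and has slope in `[g_l, g_u]`,
so `-g_u (τ - x) ≤ d(x, τ) ≤ -g_l (τ - x)` on `[0, τ]`. Integrating the lower bound
against `p₀` and the upper bound against `p₁` bounds `G` from below by a combination
of the quantities `τ_z P_z(τ_z) - E_z`, which rearranges to the claim.
-/

open MeasureTheory Set

theorem sub_mem_Icc_of_deriv_mem_Icc {f : ℝ → ℝ} {a b gl gu : ℝ}
    (hf : ContinuousOn f (Icc a b)) (hf' : DifferentiableOn ℝ f (Ioo a b))
    (hderiv : ∀ x ∈ Ioo a b, deriv f x ∈ Icc gl gu) {x : ℝ} (hx : x ∈ Icc a b) :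
    f b - f x ∈ Icc (gl * (b - x)) (gu * (b - x)) := by
  have hinterior : interior (Icc a b) = Ioo a b := interior_Icc
  have hb : b ∈ Icc a b := right_mem_Icc.2 (hx.1.trans hx.2)
  rw [← hinterior] at hf' hderiv
  exact ⟨(convex_Icc a b).mul_sub_le_image_sub_of_le_deriv hf hf'
      (fun y hy => (hderiv y hy).1) x hx b hb hx.2,
    (convex_Icc a b).image_sub_le_mul_sub_of_deriv_le hf hf'
      (fun y hy => (hderiv y hy).2) x hx b hb hx.2⟩

theorem integral_mul_mem_Icc_of_deriv_mem_Icc {f p : ℝ → ℝ} {a b gl gu : ℝ} (hab : a ≤ b)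
    (hf : ContinuousOn f (Icc a b)) (hf' : DifferentiableOn ℝ f (Ioo a b))
    (hderiv : ∀ x ∈ Ioo a b, deriv f x ∈ Icc gl gu) (hfb : f b = 0)
    (hp : ContinuousOn p (Icc a b)) (hp_nonneg : ∀ x ∈ Icc a b, 0 ≤ p x) :
    ∫ x in a..b, f x * p x ∈
      Icc (-gu * ∫ x in a..b, (b - x) * p x) (-gl * ∫ x in a..b, (b - x) * p x) := by
  have hcont : ∀ g : ℝ → ℝ, ContinuousOn g (Icc a b) →
      IntervalIntegrable (fun x => g x * p x) volume a b := fun g hg =>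
    (hg.mul hp).intervalIntegrable_of_Icc hab
  have hlin : ∀ c : ℝ, ContinuousOn (fun x => c * (b - x)) (Icc a b) := fun c => by
    fun_prop
  have hbound := fun x hx => sub_mem_Icc_of_deriv_mem_Icc hf hf' hderiv (x := x) hx
  simp only [hfb, zero_sub] at hbound
  rw [← intervalIntegral.integral_const_mul, ← intervalIntegral.integral_const_mul]
  constructor
  · refine intervalIntegral.integral_mono_on hab ?_ (hcont f hf) fun x hx => ?_
    · simpa only [mul_assoc] using hcont _ (hlin (-gu))
    · rw [← mul_assoc]
      exact mul_le_mul_of_nonneg_right (by linarith [(hbound x hx).2]) (hp_nonneg x hx)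
  · refine intervalIntegral.integral_mono_on hab (hcont f hf) ?_ fun x hx => ?_
    · simpa only [mul_assoc] using hcont _ (hlin (-gl))
    · rw [← mul_assoc]
      exact mul_le_mul_of_nonneg_right (by linarith [(hbound x hx).1]) (hp_nonneg x hx)

theorem integral_sub_mul {p : ℝ → ℝ} {a b : ℝ} (hp : ContinuousOn p (uIcc a b)) :
    ∫ x in a..b, (b - x) * p x = b * (∫ x in a..b, p x) - ∫ x in a..b, x * p x := by
  simp only [sub_mul]
  rw [intervalIntegral.integral_sub, intervalIntegral.integral_const_mul]
  · exact (continuousOn_const.mul hp).intervalIntegrable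
  · exact (continuousOn_id.mul hp).intervalIntegrable

theorem stmt_5_general
    (p0 p1 P0 P1 : ℝ → ℝ)
    (hp0 : ∀ x, 0 ≤ p0 x) (hp1 : ∀ x, 0 ≤ p1 x)
    (hp0c : Continuous p0) (hp1c : Continuous p1)
    (hP0 : ∀ x, P0 x = ∫ t in (0:ℝ)..x, p0 t)
    (hP1 : ∀ x, P1 x = ∫ t in (0:ℝ)..x, p1 t)
    (d : ℝ → ℝ → ℝ) (gl gu : ℝ)
    (hd_smooth : ∀ x₂, ContDiffOn ℝ 1 (fun x₁ => d x₁ x₂) (Set.Icc 0 x₂))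
    (hd_grad : ∀ x₂ x₁, x₁ ∈ Set.Ioo 0 x₂ →
      deriv (fun x => d x x₂) x₁ ∈ Set.Icc gl gu)
    (hd_zero : ∀ x, d x x = 0)
    (τ0 τ1 : ℝ) (hτ0 : 0 < τ0) (hτ1 : 0 < τ1)
    (G H E0 E1 : ℝ)
    (hG : G = (∫ x in (0:ℝ)..τ0, d x τ0 * p0 x) - (∫ x in (0:ℝ)..τ1, d x τ1 * p1 x))
    (hH : H = P1 τ1 - P0 τ0)
    (hE0 : E0 = ∫ x in (0:ℝ)..τ0, x * p0 x)
    (hE1 : E1 = ∫ x in (0:ℝ)..τ1, x * p1 x) :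
    G ≥ gl * τ1 * H + (gl * τ1 - gu * τ0) * P0 τ0 - gl * E1 + gu * E0 := by
  have burden_mem : ∀ τ p, 0 < τ → Continuous p → (∀ x, 0 ≤ p x) →
      ∫ x in (0:ℝ)..τ, d x τ * p x ∈
        Icc (-gu * (τ * (∫ x in (0:ℝ)..τ, p x) - ∫ x in (0:ℝ)..τ, x * p x))
          (-gl * (τ * (∫ x in (0:ℝ)..τ, p x) - ∫ x in (0:ℝ)..τ, x * p x)) := by
    intro τ p hτ hpc hp
    rw [← integral_sub_mul hpc.continuousOn]
    exact integral_mul_mem_Icc_of_deriv_mem_Icc hτ.le (hd_smooth τ).continuousOn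
      ((hd_smooth τ).differentiableOn one_ne_zero |>.mono Ioo_subset_Icc_self) (hd_grad τ)
      (hd_zero τ) hpc.continuousOn fun x _ => hp x
  have h0 := (burden_mem τ0 p0 hτ0 hp0c hp0).1
  have h1 := (burden_mem τ1 p1 hτ1 hp1c hp1).2
  rw [← hP0, ← hE0] at h0
  rw [← hP1, ← hE1] at h1
  rw [hG, hH]
  linarith

/-- Theorem 3.3 (lower bound on the social burden gap). -/
theorem stmt_5
    (p0 p1 P0 P1 : ℝ → ℝ)
    (hp0 : ∀ x, 0 ≤ p0 x) (hp1 : ∀ x, 0 ≤ p1 x)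
    (hp0c : Continuous p0) (hp1c : Continuous p1)
    (hP0 : ∀ x, P0 x = ∫ t in (0:ℝ)..x, p0 t)
    (hP1 : ∀ x, P1 x = ∫ t in (0:ℝ)..x, p1 t)
    (d : ℝ → ℝ → ℝ) (gl gu : ℝ) (hglu : gl ≤ gu) (hgu : gu ≤ 0)
    (hd_smooth : ∀ x₂, ContDiffOn ℝ 1 (fun x₁ => d x₁ x₂) (Set.Icc 0 x₂))
    (hd_grad : ∀ x₂ x₁, x₁ ∈ Set.Ioo 0 x₂ →
      deriv (fun x => d x x₂) x₁ ∈ Set.Icc gl gu)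
    (hd_zero : ∀ x, d x x = 0)
    (τ0 τ1 : ℝ) (hτ0 : 0 < τ0) (hτ1 : 0 < τ1)
    (G H E0 E1 : ℝ)
    (hG : G = (∫ x in (0:ℝ)..τ0, d x τ0 * p0 x) - (∫ x in (0:ℝ)..τ1, d x τ1 * p1 x))
    (hH : H = P1 τ1 - P0 τ0)
    (hE0 : E0 = ∫ x in (0:ℝ)..τ0, x * p0 x)
    (hE1 : E1 = ∫ x in (0:ℝ)..τ1, x * p1 x) :
    G ≥ gl * τ1 * H + (gl * τ1 - gu * τ0) * P0 τ0 - gl * E1 + gu * E0 :=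
  stmt_5_general p0 p1 P0 P1 hp0 hp1 hp0c hp1c hP0 hP1 d gl gu hd_smooth hd_grad hd_zero τ0 τ1 hτ0
    hτ1 G H E0 E1 hG hH hE0 hE1
end

section
/- (Group-specific cost bounds, Theorem 3.5.) Let group $z \in \{0,1\}$ have cost function $d_z(x_1,x_2)$ with $d_z(\tau,\tau)=0$ and $\partial d_z/\partial x_1 \in [g_{l,z}, g_{u,z}]$, $g_{l,z} \le g_{u,z} \le 0$. With $G = \int_0^{\tau_0}d_0(x,\tau_0)p_0(x)dx - \int_0^{\tau_1}d_1(x,\tau_1)p_1(x)dx$, $H = P_1(\tau_1)-P_0(\tau_0)$, and $E_z = \int_0^{\tau_z}x\,p_z(x)dx$, the following bounds hold: $G \leq g_{u,1}\tau_1 H + (g_{u,1}\tau_1 - g_{l,0}\tau_0)P_0(\tau_0) - g_{u,1}E_1 + g_{l,0}E_0$ and $G \geq g_{l,1}\tau_1 H + (g_{l,1}\tau_1 - g_{u,0}\tau_0)P_0(\tau_0) - g_{l,1}E_1 + g_{u,0}E_0$. -/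
/-!
By the mean value theorem, a cost vanishing at the threshold `τ` with slope in `[gl, gu]` is
squeezed between the lines `gu * (x - τ)` and `gl * (x - τ)` on `[0, τ]`. Integrating against
a nonnegative density turns these into bounds by `g * E - g * τ * P(τ)`, and subtracting the
bound for one group from the opposite bound for the other gives both inequalities.
-/

open MeasureTheory Set

section

variable {d p : ℝ → ℝ} {a b gl gu : ℝ}

lemma image_bounds_of_deriv_mem_Icc (hd : ContinuousOn d (Icc a b))
    (hd' : DifferentiableOn ℝ d (Ioo a b)) (hgrad : ∀ x ∈ Ioo a b, deriv d x ∈ Icc gl gu)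
    {x : ℝ} (hx : x ∈ Icc a b) :
    d b + gu * (x - b) ≤ d x ∧ d x ≤ d b + gl * (x - b) := by
  have hb : b ∈ Icc a b := right_mem_Icc.mpr (hx.1.trans hx.2)
  rw [← interior_Icc] at hd' hgrad
  have hlo := (convex_Icc a b).mul_sub_le_image_sub_of_le_deriv hd hd'
    (fun y hy => (hgrad y hy).1) x hx b hb hx.2
  have hhi := (convex_Icc a b).image_sub_le_mul_sub_of_deriv_le hd hd'
    (fun y hy => (hgrad y hy).2) x hx b hb hx.2
  constructor <;> linarith

lemma integral_const_mul_sub_mul (hp : ContinuousOn p (uIcc a b)) (c : ℝ) :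
    ∫ x in a..b, c * (x - b) * p x
      = c * (∫ x in a..b, x * p x) - c * b * ∫ x in a..b, p x := by
  have hxp : IntervalIntegrable (fun x => c * (x * p x)) volume a b :=
    ((continuousOn_id.mul hp).const_smul c).intervalIntegrable
  have hbp : IntervalIntegrable (fun x => c * b * p x) volume a b :=
    (hp.const_smul (c * b)).intervalIntegrable
  rw [← intervalIntegral.integral_const_mul, ← intervalIntegral.integral_const_mul,
    ← intervalIntegral.integral_sub hxp hbp]
  exact intervalIntegral.integral_congr fun x _ => by ring

lemma integral_mul_bounds_of_deriv_mem_Icc (hab : a ≤ b) (hp : ∀ x ∈ Icc a b, 0 ≤ p x)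
    (hpc : ContinuousOn p (Icc a b)) (hd : ContinuousOn d (Icc a b))
    (hd' : DifferentiableOn ℝ d (Ioo a b)) (hgrad : ∀ x ∈ Ioo a b, deriv d x ∈ Icc gl gu)
    (hdb : d b = 0) :
    gu * (∫ x in a..b, x * p x) - gu * b * (∫ x in a..b, p x) ≤ ∫ x in a..b, d x * p x ∧
      ∫ x in a..b, d x * p x ≤ gl * (∫ x in a..b, x * p x) - gl * b * ∫ x in a..b, p x := by
  have hpc' : ContinuousOn p (uIcc a b) := by rwa [uIcc_of_le hab]
  rw [← integral_const_mul_sub_mul hpc', ← integral_const_mul_sub_mul hpc']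
  have hdp : IntervalIntegrable (fun x => d x * p x) volume a b :=
    (hd.mul hpc).intervalIntegrable_of_Icc hab
  have hline (c : ℝ) : IntervalIntegrable (fun x => c * (x - b) * p x) volume a b :=
    (((continuousOn_id.sub continuousOn_const).const_smul c).mul hpc).intervalIntegrable_of_Icc hab
  have hsqueeze x (hx : x ∈ Icc a b) := image_bounds_of_deriv_mem_Icc hd hd' hgrad hx
  simp only [hdb, zero_add] at hsqueeze
  exact ⟨intervalIntegral.integral_mono_on hab (hline gu) hdp fun x hx =>
      mul_le_mul_of_nonneg_right (hsqueeze x hx).1 (hp x hx),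
    intervalIntegral.integral_mono_on hab hdp (hline gl) fun x hx =>
      mul_le_mul_of_nonneg_right (hsqueeze x hx).2 (hp x hx)⟩

end

theorem stmt_6_general
    (p0 p1 P0 P1 : ℝ → ℝ)
    (hp0 : ∀ x, 0 ≤ p0 x) (hp1 : ∀ x, 0 ≤ p1 x)
    (hp0c : Continuous p0) (hp1c : Continuous p1)
    (hP0 : ∀ x, P0 x = ∫ t in (0:ℝ)..x, p0 t)
    (hP1 : ∀ x, P1 x = ∫ t in (0:ℝ)..x, p1 t)
    (d0 d1 : ℝ → ℝ → ℝ) (gl0 gu0 gl1 gu1 : ℝ)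
    (hd0_smooth : ∀ x₂, ContDiffOn ℝ 1 (fun x₁ => d0 x₁ x₂) (Set.Icc 0 x₂))
    (hd1_smooth : ∀ x₂, ContDiffOn ℝ 1 (fun x₁ => d1 x₁ x₂) (Set.Icc 0 x₂))
    (hd0_grad : ∀ x₂ x₁, x₁ ∈ Set.Ioo 0 x₂ →
      deriv (fun x => d0 x x₂) x₁ ∈ Set.Icc gl0 gu0)
    (hd1_grad : ∀ x₂ x₁, x₁ ∈ Set.Ioo 0 x₂ →
      deriv (fun x => d1 x x₂) x₁ ∈ Set.Icc gl1 gu1)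
    (hd0_zero : ∀ x, d0 x x = 0) (hd1_zero : ∀ x, d1 x x = 0)
    (τ0 τ1 : ℝ) (hτ0 : 0 < τ0) (hτ1 : 0 < τ1)
    (G H E0 E1 : ℝ)
    (hG : G = (∫ x in (0:ℝ)..τ0, d0 x τ0 * p0 x) - (∫ x in (0:ℝ)..τ1, d1 x τ1 * p1 x))
    (hH : H = P1 τ1 - P0 τ0)
    (hE0 : E0 = ∫ x in (0:ℝ)..τ0, x * p0 x)
    (hE1 : E1 = ∫ x in (0:ℝ)..τ1, x * p1 x) :
    G ≤ gu1 * τ1 * H + (gu1 * τ1 - gl0 * τ0) * P0 τ0 - gu1 * E1 + gl0 * E0 ∧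
    G ≥ gl1 * τ1 * H + (gl1 * τ1 - gu0 * τ0) * P0 τ0 - gl1 * E1 + gu0 * E0 := by
  have h0 := integral_mul_bounds_of_deriv_mem_Icc hτ0.le (fun x _ => hp0 x) hp0c.continuousOn
    (hd0_smooth τ0).continuousOn
    (((hd0_smooth τ0).differentiableOn one_ne_zero).mono Ioo_subset_Icc_self)
    (hd0_grad τ0) (hd0_zero τ0)
  have h1 := integral_mul_bounds_of_deriv_mem_Icc hτ1.le (fun x _ => hp1 x) hp1c.continuousOn
    (hd1_smooth τ1).continuousOn
    (((hd1_smooth τ1).differentiableOn one_ne_zero).mono Ioo_subset_Icc_self)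
    (hd1_grad τ1) (hd1_zero τ1)
  rw [← hE0, ← hP0] at h0
  rw [← hE1, ← hP1] at h1
  subst hG hH
  constructor <;> linarith [h0.1, h0.2, h1.1, h1.2]

/-- Theorem 3.5 (social burden gap bounds with group-specific cost functions). -/
theorem stmt_6
    (p0 p1 P0 P1 : ℝ → ℝ)
    (hp0 : ∀ x, 0 ≤ p0 x) (hp1 : ∀ x, 0 ≤ p1 x)
    (hp0c : Continuous p0) (hp1c : Continuous p1)
    (hP0 : ∀ x, P0 x = ∫ t in (0:ℝ)..x, p0 t)
    (hP1 : ∀ x, P1 x = ∫ t in (0:ℝ)..x, p1 t)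
    (d0 d1 : ℝ → ℝ → ℝ) (gl0 gu0 gl1 gu1 : ℝ)
    (hglu0 : gl0 ≤ gu0) (hgu0 : gu0 ≤ 0)
    (hglu1 : gl1 ≤ gu1) (hgu1 : gu1 ≤ 0)
    (hd0_smooth : ∀ x₂, ContDiffOn ℝ 1 (fun x₁ => d0 x₁ x₂) (Set.Icc 0 x₂))
    (hd1_smooth : ∀ x₂, ContDiffOn ℝ 1 (fun x₁ => d1 x₁ x₂) (Set.Icc 0 x₂))
    (hd0_grad : ∀ x₂ x₁, x₁ ∈ Set.Ioo 0 x₂ →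
      deriv (fun x => d0 x x₂) x₁ ∈ Set.Icc gl0 gu0)
    (hd1_grad : ∀ x₂ x₁, x₁ ∈ Set.Ioo 0 x₂ →
      deriv (fun x => d1 x x₂) x₁ ∈ Set.Icc gl1 gu1)
    (hd0_zero : ∀ x, d0 x x = 0) (hd1_zero : ∀ x, d1 x x = 0)
    (τ0 τ1 : ℝ) (hτ0 : 0 < τ0) (hτ1 : 0 < τ1)
    (G H E0 E1 : ℝ)
    (hG : G = (∫ x in (0:ℝ)..τ0, d0 x τ0 * p0 x) - (∫ x in (0:ℝ)..τ1, d1 x τ1 * p1 x))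
    (hH : H = P1 τ1 - P0 τ0)
    (hE0 : E0 = ∫ x in (0:ℝ)..τ0, x * p0 x)
    (hE1 : E1 = ∫ x in (0:ℝ)..τ1, x * p1 x) :
    G ≤ gu1 * τ1 * H + (gu1 * τ1 - gl0 * τ0) * P0 τ0 - gu1 * E1 + gl0 * E0 ∧
    G ≥ gl1 * τ1 * H + (gl1 * τ1 - gu0 * τ0) * P0 τ0 - gl1 * E1 + gu0 * E0 :=
  stmt_6_general p0 p1 P0 P1 hp0 hp1 hp0c hp1c hP0 hP1 d0 d1 gl0 gu0 gl1 gu1 hd0_smooth hd1_smooth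
    hd0_grad hd1_grad hd0_zero hd1_zero τ0 τ1 hτ0 hτ1 G H E0 E1 hG hH hE0 hE1
end

section
/- (Quadratic cost social burden bound, Theorem A.1.) With linear classifier $f(x)=\mathbf{1}(u^\top x \geq v_z)$ for group $z$ and quadratic cost $c(x,x')=(x'-x)^\top B(x'-x)$ ($B$ symmetric positive definite), suppose $u^\top X$ is bounded below so that $M := \max_x(v_0 - u^\top x)$ is finite. Let $G$ be the social burden gap, $H = \Pr[u^\top X \geq v_0|Z=0]-\Pr[u^\top X \geq v_1|Z=1]$, $P_1 = \Pr[u^\top X < v_1|Z=1]$, and $E_0 = \mathbb{E}[u^\top X \cdot \mathbf{1}(u^\top X < v_0)|Z=0]$. Then $G \leq -\frac{2M}{u^\top B^{-1}u}(v_0 H - v_0 P_1 + E_0)$. -/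
/-!
Write `w = u ⬝ᵥ x`, `c = u ⬝ᵥ B⁻¹ u ≥ 0` and `p = max (v₀ - w) 0`. Dropping the (nonnegative)
burden of group 1 gives `G ≤ ∫ p² dμ₀ / c`. Since `v₀ - w ≤ M` almost surely, `p² ≤ 2 M p`, so
`G ≤ 2 M ∫ p dμ₀ / c`; and `∫ p dμ₀ = v₀ Pr[w < v₀ | Z = 0] - E₀`, which after writing the
acceptance probabilities in `H` as complements is exactly the right-hand side.
-/

open Matrix MeasureTheory

lemma sq_max_zero_le_two_mul {t M : ℝ} (h : t ≤ M) : max t 0 ^ 2 ≤ 2 * M * max t 0 := by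
  rcases le_or_gt t 0 with ht | ht
  · simp [max_eq_right ht]
  · rw [max_eq_left ht.le]
    nlinarith

section

variable {α : Type*} [MeasurableSpace α] {μ : Measure α}

lemma ae_norm_max_zero_le {f : α → ℝ} {M : ℝ} (hM : ∀ᵐ x ∂μ, f x ≤ M) :
    ∀ᵐ x ∂μ, ‖max (f x) 0‖ ≤ max M 0 := by
  filter_upwards [hM] with x hx
  rw [Real.norm_of_nonneg (le_max_right _ _)]
  exact max_le_max_right 0 hx

lemma integrable_max_zero_of_ae_le [IsFiniteMeasure μ] {f : α → ℝ} {M : ℝ}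
    (hf : AEStronglyMeasurable f μ) (hM : ∀ᵐ x ∂μ, f x ≤ M) :
    Integrable (fun x => max (f x) 0) μ :=
  .of_bound (hf.sup aestronglyMeasurable_const) _ (ae_norm_max_zero_le hM)

lemma integral_sq_max_zero_le [IsFiniteMeasure μ] {f : α → ℝ} {M : ℝ}
    (hf : AEStronglyMeasurable f μ) (hM : ∀ᵐ x ∂μ, f x ≤ M) :
    ∫ x, max (f x) 0 ^ 2 ∂μ ≤ 2 * M * ∫ x, max (f x) 0 ∂μ := by
  have hp := integrable_max_zero_of_ae_le hf hM
  have hp2 : Integrable (fun x => max (f x) 0 ^ 2) μ := by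
    refine .of_bound (hp.aestronglyMeasurable.pow 2) (max M 0 ^ 2) ?_
    filter_upwards [ae_norm_max_zero_le hM] with x hx
    rw [norm_pow]
    exact pow_le_pow_left₀ (norm_nonneg _) hx 2
  rw [← integral_const_mul]
  exact integral_mono_ae hp2 (hp.const_mul _) <| by
    filter_upwards [hM] with x hx using sq_max_zero_le_two_mul hx

lemma integral_max_sub_zero_eq [IsFiniteMeasure μ] {w : α → ℝ} (hw : Measurable w) {v : ℝ}
    (hint : Integrable (fun x => max (v - w x) 0) μ) :
    ∫ x, max (v - w x) 0 ∂μ = v * μ.real {x | w x < v} - ∫ x, (if w x < v then w x else 0) ∂μ := by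
  have hs : MeasurableSet {x | w x < v} := measurableSet_lt hw measurable_const
  have hsplit : (fun x => if w x < v then w x else 0)
      = fun x => {x | w x < v}.indicator (fun _ => v) x - max (v - w x) 0 := by
    ext x
    by_cases hx : w x < v
    · simp [hx, max_eq_left (sub_nonneg.2 hx.le)]
    · simp [hx, max_eq_right (sub_nonpos.2 (not_lt.1 hx))]
  rw [hsplit, integral_sub ((integrable_const v).indicator hs) hint,
    integral_indicator_const _ hs, smul_eq_mul]
  ring

lemma measureReal_le_eq_one_sub [IsProbabilityMeasure μ] {w : α → ℝ} (hw : Measurable w)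
    (v : ℝ) : μ.real {x | v ≤ w x} = 1 - μ.real {x | w x < v} := by
  rw [← probReal_compl_eq_one_sub (measurableSet_lt hw measurable_const)]
  congr 1
  ext x
  simp

end

theorem stmt_13_general
    (n : ℕ) (B : Matrix (Fin n) (Fin n) ℝ) (hB : B.PosDef)
    (u : Fin n → ℝ) (v0 v1 : ℝ)
    (μ0 μ1 : Measure (Fin n → ℝ))
    [IsProbabilityMeasure μ0] [IsProbabilityMeasure μ1]
    (M : ℝ)
    (hM0 : ∀ᵐ x ∂μ0, v0 - u ⬝ᵥ x ≤ M)
    (G H P1 E0 : ℝ)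
    (hG : G = (∫ x, (max (v0 - u ⬝ᵥ x) 0) ^ 2 / (u ⬝ᵥ (B⁻¹ *ᵥ u)) ∂μ0)
            - (∫ x, (max (v1 - u ⬝ᵥ x) 0) ^ 2 / (u ⬝ᵥ (B⁻¹ *ᵥ u)) ∂μ1))
    (hH : H = (μ0 {x | v0 ≤ u ⬝ᵥ x}).toReal - (μ1 {x | v1 ≤ u ⬝ᵥ x}).toReal)
    (hP1 : P1 = (μ1 {x | u ⬝ᵥ x < v1}).toReal)
    (hE0 : E0 = ∫ x, (if u ⬝ᵥ x < v0 then u ⬝ᵥ x else 0) ∂μ0) :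
    G ≤ -(2 * M / (u ⬝ᵥ (B⁻¹ *ᵥ u))) * (v0 * H - v0 * P1 + E0) := by
  set c := u ⬝ᵥ (B⁻¹ *ᵥ u)
  have hc : 0 ≤ c := by simpa using hB.inv.posSemidef.dotProduct_mulVec_nonneg u
  have hw : Measurable fun x : Fin n → ℝ => u ⬝ᵥ x := by fun_prop
  have hf : AEStronglyMeasurable (fun x => v0 - u ⬝ᵥ x) μ0 := by fun_prop
  have hburden1 : 0 ≤ ∫ x, max (v1 - u ⬝ᵥ x) 0 ^ 2 / c ∂μ1 :=
    integral_nonneg fun x => by positivity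
  have hburden0 : ∫ x, max (v0 - u ⬝ᵥ x) 0 ^ 2 / c ∂μ0
      ≤ 2 * M * (∫ x, max (v0 - u ⬝ᵥ x) 0 ∂μ0) / c := by
    rw [integral_div]
    gcongr
    exact integral_sq_max_zero_le hf hM0
  have hrhs : -(2 * M / c) * (v0 * H - v0 * P1 + E0)
      = 2 * M * (∫ x, max (v0 - u ⬝ᵥ x) 0 ∂μ0) / c := by
    rw [integral_max_sub_zero_eq hw (integrable_max_zero_of_ae_le hf hM0), hH, hP1, hE0,
      ← measureReal_def, ← measureReal_def, ← measureReal_def,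
      measureReal_le_eq_one_sub hw, measureReal_le_eq_one_sub hw]
    ring
  rw [hG, hrhs]
  linarith

/-- Theorem A.1: social burden gap bound for a linear classifier with
group-specific intercepts and quadratic (Mahalanobis-type) cost. -/
theorem stmt_13
    (n : ℕ) (B : Matrix (Fin n) (Fin n) ℝ) (hB : B.PosDef)
    (u : Fin n → ℝ) (hu : u ≠ 0) (v0 v1 : ℝ)
    (μ0 μ1 : Measure (Fin n → ℝ))
    [IsProbabilityMeasure μ0] [IsProbabilityMeasure μ1]
    (hint0 : Integrable (fun x => u ⬝ᵥ x) μ0)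
    (hint1 : Integrable (fun x => u ⬝ᵥ x) μ1)
    (M : ℝ)
    (hM0 : ∀ᵐ x ∂μ0, v0 - u ⬝ᵥ x ≤ M)
    (hM1 : ∀ᵐ x ∂μ1, v0 - u ⬝ᵥ x ≤ M)
    (G H P1 E0 : ℝ)
    (hG : G = (∫ x, (max (v0 - u ⬝ᵥ x) 0) ^ 2 / (u ⬝ᵥ (B⁻¹ *ᵥ u)) ∂μ0)
            - (∫ x, (max (v1 - u ⬝ᵥ x) 0) ^ 2 / (u ⬝ᵥ (B⁻¹ *ᵥ u)) ∂μ1))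
    (hH : H = (μ0 {x | v0 ≤ u ⬝ᵥ x}).toReal - (μ1 {x | v1 ≤ u ⬝ᵥ x}).toReal)
    (hP1 : P1 = (μ1 {x | u ⬝ᵥ x < v1}).toReal)
    (hE0 : E0 = ∫ x, (if u ⬝ᵥ x < v0 then u ⬝ᵥ x else 0) ∂μ0) :
    G ≤ -(2 * M / (u ⬝ᵥ (B⁻¹ *ᵥ u))) * (v0 * H - v0 * P1 + E0) :=
  stmt_13_general n B hB u v0 v1 μ0 μ1 M hM0 G H P1 E0 hG hH hP1 hE0
end

section
/- (Reduction of linear multi-dimensional problem to one dimension.) Let $f(x) = \mathbf{1}(u^\top x \geq v)$ and $c(x,x') = d^\top(x'-x)$ for $x' \geq x$, with $d > 0$ and $w^\star = \max_i u_i/d_i > 0$. Define $W = u^\top X$. Then the expected manipulation cost $\mathbb{E}[\min\{d^\top(x'-X) : x' \geq X, u^\top x' \geq v\} \cdot \mathbf{1}(u^\top X < v)]$ equals $\frac{1}{w^\star}\mathbb{E}[(v - W)\mathbf{1}(W < v)] = \frac{1}{w^\star}\big(v\Pr[W<v] - \mathbb{E}[W\mathbf{1}(W<v)]\big)$. -/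
/-!
The cheapest way to raise `uᵀx` by `t = v - uᵀx ≥ 0` is to move only along a coordinate `i`
maximizing `uᵢ / dᵢ`, which costs `t / w⋆`; any feasible move `y = x' - x ≥ 0` satisfies
`uᵀy ≤ w⋆ · dᵀy`, so nothing is cheaper. Integrating this pointwise cost over `{uᵀX < v}` gives
the first identity, and splitting `v - W` on that event gives the second.
-/

open Matrix MeasureTheory

theorem dotProduct_le_mul_dotProduct_of_div_le {ι : Type*} [Fintype ι] {u d y : ι → ℝ} {w : ℝ}
    (hd : ∀ i, 0 < d i) (hud : ∀ i, u i / d i ≤ w) (hy : 0 ≤ y) :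
    u ⬝ᵥ y ≤ w * (d ⬝ᵥ y) := by
  rw [dotProduct, dotProduct, Finset.mul_sum]
  refine Finset.sum_le_sum fun i _ => ?_
  have hui : u i ≤ w * d i := (div_le_iff₀ (hd i)).mp (hud i)
  calc u i * y i ≤ w * d i * y i := mul_le_mul_of_nonneg_right hui (hy i)
    _ = w * (d i * y i) := mul_assoc _ _ _

theorem isLeast_linear_manipulation_cost {ι : Type*} [Fintype ι] [DecidableEq ι]
    {u d x : ι → ℝ} {v w : ℝ} (hd : ∀ i, 0 < d i)
    (hw : IsGreatest (Set.range fun i => u i / d i) w) (hwpos : 0 < w) (hx : u ⬝ᵥ x ≤ v) :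
    IsLeast {c : ℝ | ∃ x' : ι → ℝ, (∀ i, x i ≤ x' i) ∧ v ≤ u ⬝ᵥ x' ∧ c = d ⬝ᵥ (x' - x)}
      ((v - u ⬝ᵥ x) / w) := by
  obtain ⟨i₀, hi₀⟩ := hw.1
  have hui₀ : u i₀ = w * d i₀ := by
    rw [← hi₀, div_mul_cancel₀ _ (hd i₀).ne']
  have hui₀pos : 0 < u i₀ := hui₀ ▸ mul_pos hwpos (hd i₀)
  set t := v - u ⬝ᵥ x
  have ht : 0 ≤ t := sub_nonneg.mpr hx
  constructor
  · refine ⟨x + Pi.single i₀ (t / u i₀), fun i => ?_, ?_, ?_⟩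
    · rcases eq_or_ne i i₀ with rfl | hi
      · simpa using div_nonneg ht hui₀pos.le
      · simp [hi]
    · rw [dotProduct_add, dotProduct_single, mul_div_cancel₀ _ hui₀pos.ne']
      simp [t]
    · rw [add_sub_cancel_left, dotProduct_single, hui₀]
      field_simp [(hd i₀).ne']
  · rintro c ⟨x', hx'x, hvx', rfl⟩
    have hmove : u ⬝ᵥ (x' - x) ≤ w * (d ⬝ᵥ (x' - x)) :=
      dotProduct_le_mul_dotProduct_of_div_le hd (fun i => hw.2 ⟨i, rfl⟩)
        (fun i => sub_nonneg.mpr (hx'x i))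
    rw [dotProduct_sub] at hmove
    rw [div_le_iff₀ hwpos, mul_comm]
    linarith

theorem integral_ite_lt_sub {α : Type*} [MeasurableSpace α] {μ : Measure α} [IsFiniteMeasure μ]
    {g : α → ℝ} (hg : Measurable g) (hint : Integrable g μ) (v : ℝ) :
    ∫ x, (if g x < v then v - g x else 0) ∂μ
      = v * μ.real {x | g x < v} - ∫ x, (if g x < v then g x else 0) ∂μ := by
  set s := {x | g x < v}
  have hs : MeasurableSet s := measurableSet_lt hg measurable_const
  have hsplit : (fun x => if g x < v then v - g x else 0)
      = fun x => s.indicator (fun _ => v) x - s.indicator g x := by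
    funext x
    by_cases h : g x < v <;> simp [s, h]
  have hrest : (fun x => if g x < v then g x else 0) = s.indicator g := by
    funext x
    by_cases h : g x < v <;> simp [s, h]
  rw [hsplit, hrest, integral_sub ((integrable_const v).indicator hs) (hint.indicator hs),
    integral_indicator_const _ hs, smul_eq_mul, mul_comm]

theorem stmt_16_general
    (n : ℕ) (u d : Fin n → ℝ) (v : ℝ)
    (hd : ∀ i, 0 < d i)
    (wstar : ℝ) (hw : IsGreatest (Set.range fun i => u i / d i) wstar)
    (hwpos : 0 < wstar)
    (μ : Measure (Fin n → ℝ)) [IsProbabilityMeasure μ]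
    (hint : Integrable (fun x => u ⬝ᵥ x) μ) :
    (∫ x, (if u ⬝ᵥ x < v then
        sInf {c : ℝ | ∃ x' : Fin n → ℝ,
          (∀ i, x i ≤ x' i) ∧ v ≤ u ⬝ᵥ x' ∧ c = d ⬝ᵥ (x' - x)}
      else 0) ∂μ)
      = (1 / wstar) * ∫ x, (if u ⬝ᵥ x < v then v - u ⬝ᵥ x else 0) ∂μ ∧
    (1 / wstar) * (∫ x, (if u ⬝ᵥ x < v then v - u ⬝ᵥ x else 0) ∂μ)
      = (1 / wstar) * (v * (μ {x | u ⬝ᵥ x < v}).toReal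
          - ∫ x, (if u ⬝ᵥ x < v then u ⬝ᵥ x else 0) ∂μ) := by
  refine ⟨?_, ?_⟩
  · rw [← integral_const_mul]
    congr 1
    funext x
    split_ifs with hx
    · rw [(isLeast_linear_manipulation_cost hd hw hwpos hx.le).csInf_eq, one_div_mul_eq_div]
    · rw [mul_zero]
  · rw [integral_ite_lt_sub (by fun_prop) hint v, measureReal_def]

/-- Reduction of the linear multi-dimensional strategic problem to one dimension:
the expected manipulation cost equals
`(1/w⋆)·E[(v - W)·1(W < v)] = (1/w⋆)(v·Pr[W < v] - E[W·1(W < v)])` for `W = uᵀX`. -/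
theorem stmt_16
    (n : ℕ) (u d : Fin n → ℝ) (v : ℝ)
    (hd : ∀ i, 0 < d i) (hu : ∃ i, 0 < u i)
    (wstar : ℝ) (hw : IsGreatest (Set.range fun i => u i / d i) wstar)
    (hwpos : 0 < wstar)
    (μ : Measure (Fin n → ℝ)) [IsProbabilityMeasure μ]
    (hint : Integrable (fun x => u ⬝ᵥ x) μ) :
    (∫ x, (if u ⬝ᵥ x < v then
        sInf {c : ℝ | ∃ x' : Fin n → ℝ,
          (∀ i, x i ≤ x' i) ∧ v ≤ u ⬝ᵥ x' ∧ c = d ⬝ᵥ (x' - x)}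
      else 0) ∂μ)
      = (1 / wstar) * ∫ x, (if u ⬝ᵥ x < v then v - u ⬝ᵥ x else 0) ∂μ ∧
    (1 / wstar) * (∫ x, (if u ⬝ᵥ x < v then v - u ⬝ᵥ x else 0) ∂μ)
      = (1 / wstar) * (v * (μ {x | u ⬝ᵥ x < v}).toReal
          - ∫ x, (if u ⬝ᵥ x < v then u ⬝ᵥ x else 0) ∂μ) :=
  stmt_16_general n u d v hd wstar hw hwpos μ hint
end
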